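/- For every L ≥ 2 there exists a feedforward ReLU network η of depth L and width 7 such that sup_{x∈[0,1]} |x² − η(x)| ≤ 4^{−L}. -/
import Mathlib


open scoped BigOperators

/-- `ReLUNetFun f d w` says that `f` is computed by a feedforward ReLU network with
`d` weight matrices (depth) and maximal hidden-layer size `w` (width). -/
inductive ReLUNetFun : ∀ {m k : ℕ}, ((Fin m → ℝ) → (Fin k → ℝ)) → ℕ → ℕ → Prop
  | affine {m k : ℕ} (W : Matrix (Fin k) (Fin m) ℝ) (b : Fin k → ℝ) :
      ReLUNetFun (fun x => W.mulVec x + b) 1 0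
  | layer {m p k : ℕ} {f : (Fin m → ℝ) → (Fin p → ℝ)} {d w : ℕ}
      (hf : ReLUNetFun f d w) (W : Matrix (Fin k) (Fin p) ℝ) (b : Fin k → ℝ) :
      ReLUNetFun (fun x => W.mulVec (fun i => max (f x i) 0) + b) (d + 1) (max w p)

/-- The tooth function, written with ReLUs. -/
noncomputable def gT (x : ℝ) : ℝ :=
  2 * max x 0 - 4 * max (x - 2⁻¹) 0 + 2 * max (x - 1) 0

/-- Yarotsky's partial sums `x - ∑_{t=1}^s g^{∘t}(x)/4^t`. -/
noncomputable def yA : ℕ → ℝ → ℝ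
  | 0, x => x
  | (s+1), x => yA s x - gT^[s+1] x / 4 ^ (s+1)

lemma gT_left {x : ℝ} (h0 : 0 ≤ x) (h1 : x ≤ 2⁻¹) : gT x = 2 * x := by
  have e1 : max x 0 = x := max_eq_left h0
  have e2 : max (x - 2⁻¹) 0 = 0 := max_eq_right (by linarith)
  have e3 : max (x - 1) 0 = 0 := max_eq_right (by linarith)
  rw [gT, e1, e2, e3]; ring

lemma gT_right {x : ℝ} (h0 : 2⁻¹ ≤ x) (h1 : x ≤ 1) : gT x = 2 - 2 * x := by
  have e1 : max x 0 = x := max_eq_left (by norm_num at h0 ⊢; linarith)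
  have e2 : max (x - 2⁻¹) 0 = x - 2⁻¹ := max_eq_left (by linarith)
  have e3 : max (x - 1) 0 = 0 := max_eq_right (by linarith)
  rw [gT, e1, e2, e3]; ring

lemma gT_mem {x : ℝ} (h0 : 0 ≤ x) (h1 : x ≤ 1) : 0 ≤ gT x ∧ gT x ≤ 1 := by
  rcases le_or_gt x 2⁻¹ with h | h
  · rw [gT_left h0 h]; norm_num at h ⊢; constructor <;> linarith
  · rw [gT_right h.le h1]; norm_num at h ⊢; constructor <;> linarith

lemma iter_mem (s : ℕ) {x : ℝ} (h0 : 0 ≤ x) (h1 : x ≤ 1) :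
    0 ≤ gT^[s] x ∧ gT^[s] x ≤ 1 := by
  induction s with
  | zero => exact ⟨h0, h1⟩
  | succ n ih =>
      rw [Function.iterate_succ_apply']
      exact gT_mem ih.1 ih.2

lemma yA_rec (s : ℕ) : ∀ x : ℝ, 0 ≤ x → x ≤ 1 →
    (x ≤ 2⁻¹ → yA (s+1) x = yA s (2*x) / 4) ∧
    (2⁻¹ ≤ x → yA (s+1) x = 2*x - 1 + yA s (2 - 2*x) / 4) := by
  induction s with
  | zero =>
      intro x h0 h1
      constructor
      · intro hx
        simp only [yA, zero_add, Function.iterate_one, pow_one]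
        rw [gT_left h0 hx]; ring
      · intro hx
        simp only [yA, zero_add, Function.iterate_one, pow_one]
        rw [gT_right hx h1]; ring
  | succ n ih =>
      intro x h0 h1
      have key : ∀ u : ℝ, yA (n+2) u = yA (n+1) u - gT^[n+1] (gT u) / 4^(n+2) := by
        intro u
        simp only [yA, Function.iterate_succ_apply]
      constructor
      · intro hx
        have hg : gT x = 2*x := gT_left h0 hx
        rw [key, (ih x h0 h1).1 hx, hg]
        have e : yA (n+1) (2*x) = yA n (2*x) - gT^[n+1] (2*x) / 4^(n+1) := by
          simp only [yA]
        rw [e]; ring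
      · intro hx
        have hg : gT x = 2 - 2*x := gT_right hx h1
        rw [key, (ih x h0 h1).2 hx, hg]
        have e : yA (n+1) (2-2*x) = yA n (2-2*x) - gT^[n+1] (2-2*x) / 4^(n+1) := by
          simp only [yA]
        rw [e]; ring

lemma yA_bounds (s : ℕ) : ∀ x : ℝ, 0 ≤ x → x ≤ 1 →
    x^2 ≤ yA s x ∧ yA s x ≤ x^2 + ((4:ℝ)^(s+1))⁻¹ := by
  induction s with
  | zero =>
      intro x h0 h1
      simp only [yA, pow_one]
      constructor
      · nlinarith
      · nlinarith [sq_nonneg (x - 2⁻¹)]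
  | succ n ih =>
      intro x h0 h1
      have hpow : (0:ℝ) < 4^(n+1) := by positivity
      have hpow2 : ((4:ℝ)^(n+1+1))⁻¹ = ((4:ℝ)^(n+1))⁻¹ / 4 := by
        rw [pow_succ]
        rw [mul_inv]
        ring
      rcases le_or_gt x 2⁻¹ with hx | hx
      · obtain ⟨lo, hi⟩ := ih (2*x) (by linarith) (by norm_num at hx ⊢; linarith)
        rw [(yA_rec n x h0 h1).1 hx, hpow2]
        constructor
        · nlinarith
        · nlinarith
      · obtain ⟨lo, hi⟩ := ih (2-2*x) (by linarith) (by norm_num at hx ⊢; linarith)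
        rw [(yA_rec n x h0 h1).2 hx.le, hpow2]
        constructor
        · nlinarith
        · nlinarith

/-- Hidden-layer weight matrix at stage `n`. -/
noncomputable def MW (n : ℕ) : Matrix (Fin 7) (Fin 7) ℝ :=
  Matrix.of ![![2, -4, 2, 0, 0, 0, 0], ![2, -4, 2, 0, 0, 0, 0], ![2, -4, 2, 0, 0, 0, 0],
    ![-2/4^(n+1), 4/4^(n+1), -2/4^(n+1), 1, 0, 0, 0],
    ![0,0,0,0,0,0,0], ![0,0,0,0,0,0,0], ![0,0,0,0,0,0,0]]

/-- Hidden-layer bias. -/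
noncomputable def bM : Fin 7 → ℝ := ![0, -2⁻¹, -1, 0, 0, 0, 0]

/-- Input weight matrix. -/
noncomputable def W0 : Matrix (Fin 7) (Fin 1) ℝ :=
  Matrix.of ![![1], ![1], ![1], ![1], ![0], ![0], ![0]]

/-- Output weight matrix after `k+1` hidden stages. -/
noncomputable def Wout (k : ℕ) : Matrix (Fin 1) (Fin 7) ℝ :=
  Matrix.of ![![-2/4^(k+1), 4/4^(k+1), -2/4^(k+1), 1, 0, 0, 0]]

/-- The body of the network: pre-activations of the `n`-th hidden layer. -/
noncomputable def G : ℕ → (Fin 1 → ℝ) → (Fin 7 → ℝ)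
  | 0 => fun x => W0.mulVec x + bM
  | (n+1) => fun x => (MW n).mulVec (fun i => max (G n x i) 0) + bM

lemma G_net : ∀ n, ReLUNetFun (G n) (n+1) (if n = 0 then 0 else 7)
  | 0 => ReLUNetFun.affine W0 bM
  | (n+1) => by
      have h := ReLUNetFun.layer (G_net n) (MW n) bM
      have e : max (if n = 0 then 0 else 7) 7 = (if n+1 = 0 then 0 else 7) := by
        cases n <;> simp
      rw [e] at h
      exact h

lemma G_val : ∀ (n : ℕ) (x : ℝ), 0 ≤ x → x ≤ 1 →
    G n (fun _ => x) = ![gT^[n] x, gT^[n] x - 2⁻¹, gT^[n] x - 1, yA n x, 0, 0, 0] := by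
  intro n
  induction n with
  | zero =>
      intro x h0 h1
      funext i
      revert i
      simp only [G, W0, bM, Matrix.mulVec, dotProduct, Fin.sum_univ_succ,
        Fin.sum_univ_zero, Fin.forall_fin_succ, IsEmpty.forall_iff, Pi.add_apply,
        Matrix.cons_val_zero, Matrix.cons_val_succ, Matrix.of_apply, and_true,
        Function.iterate_zero, id_eq, yA]
      refine ⟨by ring, by ring, by ring, by ring, by ring, by ring, by ring⟩
  | succ n ih =>
      intro x h0 h1
      have hh := iter_mem n h0 h1
      have hy : 0 ≤ yA n x := le_trans (sq_nonneg x) (by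
        have := (yA_bounds n x h0 h1).1
        simpa [sq] using this)
      have e : G (n+1) (fun _ => x)
          = (MW n).mulVec (fun i => max ((G n (fun _ => x)) i) 0) + bM := rfl
      rw [e, ih x h0 h1]
      funext i
      revert i
      simp only [MW, bM, Matrix.mulVec, dotProduct, Fin.sum_univ_succ,
        Fin.sum_univ_zero, Fin.forall_fin_succ, IsEmpty.forall_iff, Pi.add_apply,
        Matrix.cons_val_zero, Matrix.cons_val_succ, Matrix.of_apply, and_true,
        Function.iterate_succ_apply', yA, max_eq_left hy, gT]
      refine ⟨by ring, by ring, by ring, by ring, by ring, by ring, by ring⟩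

/-- For every `L ≥ 2` there is a depth-`L`, width-`7` ReLU network approximating
`x ↦ x²` on `[0,1]` to accuracy `4^{-L}`. -/
theorem stmt8 (L : ℕ) (hL : 2 ≤ L) :
    ∃ η : (Fin 1 → ℝ) → (Fin 1 → ℝ), ReLUNetFun η L 7 ∧
      ∀ x ∈ Set.Icc (0 : ℝ) 1, |x ^ 2 - η (fun _ => x) 0| ≤ ((4 : ℝ) ^ L)⁻¹ := by
  obtain ⟨k, rfl⟩ : ∃ k, L = k + 2 := ⟨L - 2, by omega⟩
  refine ⟨fun x => (Wout k).mulVec (fun i => max (G k x i) 0) + (0 : Fin 1 → ℝ), ?_, ?_⟩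
  · have h := ReLUNetFun.layer (G_net k) (Wout k) (0 : Fin 1 → ℝ)
    have e : max (if k = 0 then 0 else 7) 7 = 7 := by
      cases k <;> simp
    rw [e] at h
    exact h
  · rintro x ⟨h0, h1⟩
    have hh := iter_mem k h0 h1
    have hy : 0 ≤ yA k x := le_trans (sq_nonneg x) (by
      have := (yA_bounds k x h0 h1).1
      simpa [sq] using this)
    have hval : ((Wout k).mulVec
        (fun i => max ((G k (fun _ => x)) i) 0) + (0 : Fin 1 → ℝ)) 0 = yA (k+1) x := by
      rw [G_val k x h0 h1]
      simp only [Wout, Matrix.mulVec, dotProduct, Fin.sum_univ_succ,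
        Fin.sum_univ_zero, Pi.add_apply, Pi.zero_apply,
        Matrix.cons_val_zero, Matrix.cons_val_succ, Matrix.of_apply,
        Function.iterate_succ_apply', yA, max_eq_left hy, gT]
      ring
    have hval' : (fun x => ((Wout k).mulVec fun i => max (G k x i) 0)
        + (0 : Fin 1 → ℝ)) (fun _ => x) 0 = yA (k+1) x := hval
    rw [hval']
    obtain ⟨lo, hi⟩ := yA_bounds (k+1) x h0 h1
    have hpos : (0:ℝ) < ((4:ℝ)^(k+2))⁻¹ := by positivity
    have e2 : ((4:ℝ)^(k+1+1))⁻¹ = ((4:ℝ)^(k+2))⁻¹ := by norm_num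
    rw [e2] at hi
    rw [abs_le]
    constructor <;> linarith
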